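/- (Nondegeneracy at the transcritical bifurcation.) For the red coral model at λ* = c₂/(c₁(b·a)) and with v = a the right eigenvector of D_x f(λ*, 0) for eigenvalue 1, the second derivative of the first component of the model map at the origin in the direction (v, v) satisfies D_{xx}f₁(λ*, 0)[a, a] = (2(β − α)/Ω)·Σ_{k=2}^{13} p_k a_k, and this quantity is nonzero (indeed positive, since β > α); hence, with w the left eigenvector (w₁ = b·a, w₁₃ = b₁₃, w_k = b_k + S_k w_{k+1} for k = 2,…,12), wᵗ D_{xx}f(λ*, 0)[a, a] ≠ 0. -/

import Mathlib

/-!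
Along the ray `t ↦ t a` the first component of the model is `t · h t` with
`h t = λ (b·a) φ(t P(a))`, so its second derivative at `0` is `2 h'(0) = 2 λ (b·a) P(a) φ'(0)`.
Since `φ'(0) = c₁(β - α)/c₂`, at `λ* = c₂/(c₁ (b·a))` everything cancels except `2(β - α) P(a)`.
The other components are linear in `t`, so only `w₁ = b·a > 0` survives in `wᵗ D_{xx}f[a, a]`.
-/

noncomputable section

open Real Finset Matrix

namespace RedCoral

/-- Survival rates `S₁,…,S₁₂` (1-based index; all other indices map to 0). -/
def Sr : ℕ → ℝ
  | 1 => 0.89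
  | 2 => 0.63
  | 3 => 0.70
  | 4 => 0.52
  | 5 => 0.44
  | 6 => 0.29
  | 7 => 0.57
  | 8 => 0.33
  | 9 => 0.75
  | 10 => 1
  | 11 => 0.33
  | 12 => 1
  | _ => 0

/-- Fertility rates `F₁,…,F₁₃` (1-based index). -/
def Fert : ℕ → ℝ
  | 3 => 0.36
  | 4 => 0.64
  | 5 => 0.82
  | 6 => 0.97
  | 7 => 0.98
  | 8 => 0.99
  | 9 => 1
  | 10 => 1
  | 11 => 1
  | 12 => 1
  | 13 => 1
  | _ => 0

/-- Birth rates `b_k = F_k k^{2.324}`. -/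
def br (k : ℕ) : ℝ := Fert k * (k : ℝ) ^ (2.324 : ℝ)

/-- Polyps per colony `p_k = 1.239 k^{2.324}`. -/
def pr (k : ℕ) : ℝ := 1.239 * (k : ℝ) ^ (2.324 : ℝ)

def c1 : ℝ := 1.8e5
def c2 : ℝ := 1.3e7
def αr : ℝ := 5e-4
def βr : ℝ := 3.4e-3
def Ωr : ℝ := 36

/-- Recruit function `φ(y) = c₁ e^{-αy} / (y² + c₂ e^{-βy})`. -/
def φr (y : ℝ) : ℝ := c1 * Real.exp (-αr * y) / (y ^ 2 + c2 * Real.exp (-βr * y))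

/-- Polyp density `P(x) = (1/Ω) Σ_{k=2}^{13} p_k x_k` (0-based coordinates:
coordinate `i` is age group `i+1`). -/
def Pd (x : Fin 13 → ℝ) : ℝ :=
  (1 / Ωr) * ∑ i : Fin 13, if i.val = 0 then 0 else pr (i.val + 1) * x i

/-- The red coral model map `f : ℝ × ℝ¹³ → ℝ¹³`:
`f₁(λ,x) = λ φ(P(x)) Σ_k b_k x_k`, `f_{k+1}(λ,x) = S_k x_k`. -/
def fc (lam : ℝ) (x : Fin 13 → ℝ) : Fin 13 → ℝ := fun i =>
  if _h : i.val = 0 then lam * φr (Pd x) * ∑ j : Fin 13, br (j.val + 1) * x j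
  else Sr i.val * x ⟨i.val - 1, by have := i.isLt; omega⟩

/-- Cumulative survival `a₁ = 1`, `a_k = ∏_{i=1}^{k-1} S_i` (here `ar k` is the
1-based `a_{k+1}`, i.e. `ar k = ∏_{j=1}^{k} S_j`, so the 0-based coordinate `i`
carries `a_{i+1} = ar i`). -/
def ar (k : ℕ) : ℝ := ∏ j ∈ Finset.Icc 1 k, Sr j

/-- `b·a = Σ_{k=1}^{13} a_k b_k`. -/
def ba : ℝ := ∑ i : Fin 13, ar i.val * br (i.val + 1)

/-- `Σ_{k=2}^{13} p_k a_k`. -/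
def sumPA : ℝ := ∑ i : Fin 13, if i.val = 0 then 0 else pr (i.val + 1) * ar i.val

/-- The vector `a = (a₁,…,a₁₃)`. -/
def avec : Fin 13 → ℝ := fun i => ar i.val

/-- The Leslie matrix `D_x f(λ,0)`: first row `λ (c₁/c₂) b_j`, subdiagonal
`S₁,…,S₁₂`, all other entries zero. -/
def Jmat (lam : ℝ) : Matrix (Fin 13) (Fin 13) ℝ := Matrix.of fun i j =>
  if i.val = 0 then lam * (c1 / c2) * br (j.val + 1)
  else if j.val + 1 = i.val then Sr i.val else 0

lemma iteratedDeriv_two_id_mul_zero {h : ℝ → ℝ} (hh : ContDiff ℝ 2 h) :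
    iteratedDeriv 2 (fun t => t * h t) 0 = 2 * deriv h 0 := by
  have hd : Differentiable ℝ h := hh.differentiable (by norm_num)
  have hd' : Differentiable ℝ (deriv h) := by
    simpa only [iteratedDeriv_one] using hh.differentiable_iteratedDeriv 1 (by norm_num)
  have hderiv : deriv (fun t => t * h t) = fun t => h t + t * deriv h t := by
    funext t
    rw [deriv_fun_mul differentiableAt_fun_id (hd t), deriv_id'', one_mul]
  rw [iteratedDeriv_succ, iteratedDeriv_one, hderiv,
    deriv_fun_add (hd 0) (by fun_prop : DifferentiableAt ℝ (fun t => t * deriv h t) 0),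
    deriv_fun_mul differentiableAt_fun_id (hd' 0), deriv_id'']
  ring

lemma c2_pos : 0 < c2 := by norm_num [c2]

lemma φr_denom_pos (y : ℝ) : 0 < y ^ 2 + c2 * Real.exp (-βr * y) := by
  have := c2_pos
  positivity

@[fun_prop]
lemma contDiff_φr {n : WithTop ℕ∞} : ContDiff ℝ n φr :=
  ContDiff.div (by fun_prop) (by fun_prop) fun y => (φr_denom_pos y).ne'

lemma hasDerivAt_φr_zero : HasDerivAt φr (c1 * (βr - αr) / c2) 0 := by
  have hnum : HasDerivAt (fun y => c1 * Real.exp (-αr * y))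
      (c1 * (Real.exp (-αr * 0) * -αr)) 0 :=
    ((hasDerivAt_id 0).const_mul (-αr) |>.exp.const_mul c1).congr_deriv (by simp)
  have hden : HasDerivAt (fun y => y ^ 2 + c2 * Real.exp (-βr * y))
      (2 * 0 + c2 * (Real.exp (-βr * 0) * -βr)) 0 :=
    (hasDerivAt_pow 2 0).add ((hasDerivAt_id 0).const_mul (-βr) |>.exp.const_mul c2)
      |>.congr_deriv (by simp)
  refine (hnum.div hden (φr_denom_pos 0).ne').congr_deriv ?_
  have := c2_pos.ne'
  simp only [mul_zero, Real.exp_zero, zero_add, ne_eq, OfNat.ofNat_ne_zero,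
    not_false_eq_true, zero_pow]
  field_simp
  ring

lemma Pd_smul (t : ℝ) (x : Fin 13 → ℝ) : Pd (t • x) = t * Pd x := by
  simp only [Pd, Pi.smul_apply, smul_eq_mul, Finset.mul_sum]
  refine Finset.sum_congr rfl fun i _ => ?_
  split_ifs <;> ring

lemma fc_smul_zero (lam t : ℝ) (x : Fin 13 → ℝ) :
    fc lam (t • x) 0 = t * (lam * (∑ j : Fin 13, br (j.val + 1) * x j) * φr (t * Pd x)) := by
  have hsum : ∑ j : Fin 13, br (j.val + 1) * (t * x j)
      = t * ∑ j : Fin 13, br (j.val + 1) * x j := by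
    rw [Finset.mul_sum]
    exact Finset.sum_congr rfl fun _ _ => by ring
  simp only [fc, Fin.val_zero, dite_true, Pd_smul, Pi.smul_apply, smul_eq_mul, hsum]
  ring

lemma fc_smul_of_ne_zero (lam t : ℝ) (x : Fin 13 → ℝ) {i : Fin 13} (hi : i ≠ 0) :
    fc lam (t • x) i = t * fc lam x i := by
  simp only [fc, Fin.val_eq_zero_iff, hi, dite_false, Pi.smul_apply, smul_eq_mul]
  ring

lemma iteratedDeriv_two_fc_smul_zero (lam : ℝ) (x : Fin 13 → ℝ) :
    iteratedDeriv 2 (fun t : ℝ => fc lam (t • x) 0) 0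
      = 2 * lam * (∑ j : Fin 13, br (j.val + 1) * x j) * Pd x * (c1 * (βr - αr) / c2) := by
  set B := ∑ j : Fin 13, br (j.val + 1) * x j
  have hφ : HasDerivAt (fun t => lam * B * φr (t * Pd x))
      (lam * B * (c1 * (βr - αr) / c2 * Pd x)) 0 := by
    refine .const_mul _ ?_
    have hφr : HasDerivAt φr (c1 * (βr - αr) / c2) (0 * Pd x) := by
      rw [zero_mul]; exact hasDerivAt_φr_zero
    exact hφr.comp 0 (hasDerivAt_mul_const (Pd x))
  simp_rw [fc_smul_zero]
  rw [iteratedDeriv_two_id_mul_zero (by fun_prop), hφ.deriv]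
  ring

lemma iteratedDeriv_two_fc_smul_of_ne_zero (lam : ℝ) (x : Fin 13 → ℝ) {i : Fin 13}
    (hi : i ≠ 0) :
    iteratedDeriv 2 (fun t : ℝ => fc lam (t • x) i) 0 = 0 := by
  simp_rw [fc_smul_of_ne_zero lam _ x hi]
  rw [iteratedDeriv_two_id_mul_zero contDiff_const, deriv_const, mul_zero]

lemma Sr_nonneg (k : ℕ) : 0 ≤ Sr k := by
  unfold Sr; split <;> norm_num

lemma Sr_pos {k : ℕ} (hk₁ : 1 ≤ k) (hk₂ : k ≤ 12) : 0 < Sr k := by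
  interval_cases k <;> norm_num [Sr]

lemma ar_nonneg (k : ℕ) : 0 ≤ ar k :=
  Finset.prod_nonneg fun j _ => Sr_nonneg j

lemma ar_pos {k : ℕ} (hk : k ≤ 12) : 0 < ar k :=
  Finset.prod_pos fun _ hj => Sr_pos (Finset.mem_Icc.1 hj).1 ((Finset.mem_Icc.1 hj).2.trans hk)

lemma br_nonneg (k : ℕ) : 0 ≤ br k := by
  refine mul_nonneg ?_ (Real.rpow_nonneg k.cast_nonneg _)
  unfold Fert; split <;> norm_num

lemma pr_pos {k : ℕ} (hk : k ≠ 0) : 0 < pr k :=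
  mul_pos (by norm_num) (Real.rpow_pos_of_pos (Nat.cast_pos.2 (Nat.pos_of_ne_zero hk)) _)

lemma ba_pos : 0 < ba := by
  refine Finset.sum_pos' (fun i _ => mul_nonneg (ar_nonneg _) (br_nonneg _))
    ⟨2, Finset.mem_univ _, mul_pos (ar_pos (by norm_num)) ?_⟩
  exact mul_pos (by norm_num [Fert]) (Real.rpow_pos_of_pos (by norm_num) _)

lemma sumPA_pos : 0 < sumPA := by
  refine Finset.sum_pos' (fun i _ => ?_) ⟨1, Finset.mem_univ _, ?_⟩
  · split_ifs
    · exact le_rfl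
    · exact mul_nonneg (pr_pos (by omega)).le (ar_nonneg _)
  · rw [if_neg (by decide)]
    exact mul_pos (pr_pos (by norm_num)) (ar_pos (by norm_num))

lemma iteratedDeriv_two_fc_smul_avec_zero :
    iteratedDeriv 2 (fun t : ℝ => fc (c2 / (c1 * ba)) (t • avec) 0) 0
      = (2 * (βr - αr) / Ωr) * sumPA := by
  have hsum : ∑ j : Fin 13, br (j.val + 1) * avec j = ba :=
    Finset.sum_congr rfl fun _ _ => mul_comm _ _
  have hPd : Pd avec = sumPA / Ωr := by rw [Pd, one_div_mul_eq_div]; rfl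
  have := ba_pos.ne'
  have := c2_pos.ne'
  have : c1 ≠ 0 := by norm_num [c1]
  rw [iteratedDeriv_two_fc_smul_zero, hsum, hPd]
  field_simp

-- `D_{xx}f(λ*, 0)[a, a]` is encoded as the second derivative at `t = 0` of `t ↦ f(λ*, t a)`.
theorem red_coral_nondegeneracy_general (w : Fin 13 → ℝ)
    (h0 : w 0 = ba) :
    iteratedDeriv 2 (fun t : ℝ => fc (c2 / (c1 * ba)) (t • avec) 0) 0
        = (2 * (βr - αr) / Ωr) * sumPA ∧
    0 < (2 * (βr - αr) / Ωr) * sumPA ∧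
    ∑ i : Fin 13, w i *
        iteratedDeriv 2 (fun t : ℝ => fc (c2 / (c1 * ba)) (t • avec) i) 0 ≠ 0 := by
  have hpos : 0 < (2 * (βr - αr) / Ωr) * sumPA :=
    mul_pos (by norm_num [βr, αr, Ωr]) sumPA_pos
  refine ⟨iteratedDeriv_two_fc_smul_avec_zero, hpos, ?_⟩
  rw [Finset.sum_eq_single_of_mem 0 (Finset.mem_univ _) fun i _ hi => by
    rw [iteratedDeriv_two_fc_smul_of_ne_zero _ _ hi, mul_zero]]
  rw [h0, iteratedDeriv_two_fc_smul_avec_zero]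
  exact mul_ne_zero ba_pos.ne' hpos.ne'

/-- nondegeneracy at the transcritical bifurcation: at
`λ* = c₂/(c₁(b·a))` and with `v = a` the right eigenvector,
`D_{xx}f₁(λ*,0)[a,a]` — the second derivative at `t = 0` of
`t ↦ f₁(λ*, t a)` — equals `(2(β-α)/Ω) Σ_{k=2}^{13} p_k a_k`, which is
positive (since `β > α`); hence with `w` the left eigenvector,
`wᵗ D_{xx}f(λ*,0)[a,a] ≠ 0`. -/
theorem red_coral_nondegeneracy (w : Fin 13 → ℝ)
    (h0 : w 0 = ba) (h12 : w 12 = br 13)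
    (hrec : ∀ i : Fin 13, 1 ≤ i.val → i.val ≤ 11 →
      w i = br (i.val + 1) + Sr (i.val + 1) * w (i + 1)) :
    iteratedDeriv 2 (fun t : ℝ => fc (c2 / (c1 * ba)) (t • avec) 0) 0
        = (2 * (βr - αr) / Ωr) * sumPA ∧
    0 < (2 * (βr - αr) / Ωr) * sumPA ∧
    ∑ i : Fin 13, w i *
        iteratedDeriv 2 (fun t : ℝ => fc (c2 / (c1 * ba)) (t • avec) i) 0 ≠ 0 :=
  red_coral_nondegeneracy_general w h0

end RedCoral
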